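/- arXiv:1106.5915 — 2 statements merged into one kernel-verified Lean document; each statement's English description precedes it below -/
import Mathlib

section
/- Identification of the pre-jump limit law (Proposition 4.1). Assume E e^{αX_1}<1 for some α>0. Let Z̃ be a D-valued random element with law given by the path marginal μ(dw) of the probability measure μ, and set τ_{Z̃}=inf{t>0: Z̃_t=Δ}. Then the killed path {Z̃_t : t<τ_{Z̃}} has the same distribution as {Z_t : t<ρ}, where Z is the Esscher transform of X and ρ is an independent exponential random variable with parameter c₁. -/
open MeasureTheory ProbabilityTheory Filter Set Real
open scoped ENNReal NNReal

noncomputable section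

namespace GriffinMaller

/-! ### Convolution equivalent distributions -/

/-- Convolution of two measures on `ℝ`. -/
def mconv (m₁ m₂ : Measure ℝ) : Measure ℝ :=
  (m₁.prod m₂).map fun p => p.1 + p.2

/-- The (real-valued) tail of a measure on `ℝ`. -/
def mtail (m : Measure ℝ) (u : ℝ) : ℝ := (m (Set.Ioi u)).toReal

/-- A probability distribution on `[0,∞)` belongs to the convolution equivalent class
`S^(α)`: its tail is everywhere positive, `F̄(u+x)/F̄(u) → e^{-αx}` and
`F̄^{2*}(u)/F̄(u)` converges to a finite limit as `u → ∞`. -/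
def IsConvEquiv (α : ℝ) (m : Measure ℝ) : Prop :=
  IsProbabilityMeasure m ∧ m (Set.Iio 0) = 0 ∧ (∀ u : ℝ, 0 < mtail m u) ∧
    (∀ x : ℝ, Tendsto (fun u => mtail m (u + x) / mtail m u) atTop
      (nhds (Real.exp (-α * x)))) ∧
    ∃ L : ℝ, Tendsto (fun u => mtail (mconv m m) u / mtail m u) atTop (nhds L)

/-- A nonnegative tail function `T` (e.g. the tail of a Lévy measure) is in `S^(α)`:
it is tail equivalent to a convolution equivalent probability distribution on `[0,∞)`.
(The class `S^(α)` is closed under tail equivalence.) -/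
def TailInSalpha (α : ℝ) (T : ℝ → ℝ) : Prop :=
  ∃ m : Measure ℝ, IsConvEquiv α m ∧
    ∃ c : ℝ, 0 < c ∧ Tendsto (fun u => T u / mtail m u) atTop (nhds c)

/-! ### Path functionals -/

/-- The path of the process at a sample point. -/
def path {Ω : Type*} (X : ℝ → Ω → ℝ) (ω : Ω) : ℝ → ℝ := fun t => X t ω

/-- Càdlàg on `[0,∞)`: right continuous with left limits. -/
def Cadlag (w : ℝ → ℝ) : Prop :=
  (∀ t : ℝ, 0 ≤ t → ContinuousWithinAt w (Set.Ici t) t) ∧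
    ∀ t : ℝ, 0 < t → ∃ l : ℝ, Tendsto w (nhdsWithin t (Set.Iio t)) (nhds l)

/-- Running supremum `w̄_t = sup_{0 ≤ s ≤ t} w_s`. -/
def runSup (w : ℝ → ℝ) (t : ℝ) : ℝ := sSup (w '' Set.Icc 0 t)

/-- Supremum `w̄_{t-}` over `[0,t)` (with the convention `w̄_{0-} = w_0`). -/
def preSup (w : ℝ → ℝ) (t : ℝ) : ℝ := sSup (w '' insert 0 (Set.Ico 0 t))

/-- The left limit `w_{t-}` (with the convention `w_{0-} = w_0`). -/
def preVal (w : ℝ → ℝ) (t : ℝ) : ℝ := if 0 < t then Function.leftLim w t else w 0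

/-- `G_{t-}`, the last time on `[0,t)` at which the path attains its running maximum
(with the convention `G_{0-} = 0`). -/
def lastMaxPre (w : ℝ → ℝ) (t : ℝ) : ℝ := sSup {s | 0 ≤ s ∧ s < t ∧ w s = runSup w s}

/-- First passage time of a path strictly above the level `0`. -/
def tauP (w : ℝ → ℝ) : ℝ := sInf {t | 0 ≤ t ∧ 0 < w t}

/-! ### Lévy processes -/

variable {Ω : Type*} [MeasurableSpace Ω]

/-- `X` is a Lévy process under the probability measure `P`: it starts at `0`, has
a.s. càdlàg paths and stationary, (mutually) independent increments. -/
structure IsLevy (P : Measure Ω) (X : ℝ → Ω → ℝ) : Prop where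
  isProb : IsProbabilityMeasure P
  meas : ∀ t, Measurable (X t)
  negTimes : ∀ t : ℝ, t ≤ 0 → ∀ ω, X t ω = X 0 ω
  init : ∀ᵐ ω ∂P, X 0 ω = 0
  cadlag : ∀ᵐ ω ∂P, Cadlag (path X ω)
  stationary : ∀ s t : ℝ, 0 ≤ s → 0 ≤ t →
    Measure.map (fun ω => X (s + t) ω - X s ω) P = Measure.map (X t) P
  indepIncr : ∀ (n : ℕ) (a : ℕ → ℝ), (∀ i, 0 ≤ a i) → Monotone a →
    iIndepFun (fun (i : Fin n) ω => X (a (i.1 + 1)) ω - X (a i.1) ω) P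

/-- `X` is not the negative of a subordinator. -/
def NotNegSubordinator (P : Measure Ω) (X : ℝ → Ω → ℝ) : Prop :=
  ¬ ∀ᵐ ω ∂P, ∀ s t : ℝ, 0 ≤ s → s ≤ t → X t ω ≤ X s ω

/-- Expected number of jumps of size `> x` during the time interval `(0,1]`; for
`x > 0` this is the tail `Π̄⁺_X(x)` of the Lévy measure of `X`. -/
def jumpTailE (P : Measure Ω) (X : ℝ → Ω → ℝ) (x : ℝ) : ℝ≥0∞ :=
  ∫⁻ ω, Measure.count {t : ℝ | t ∈ Set.Ioc (0:ℝ) 1 ∧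
    x < X t ω - Function.leftLim (path X ω) t} ∂P

/-- The tail `Π̄⁺_X` of the Lévy measure, as a real-valued function. -/
def jumpTail (P : Measure Ω) (X : ℝ → Ω → ℝ) (x : ℝ) : ℝ := (jumpTailE P X x).toReal

/-- `ν` is (the restriction to `(0,∞)` of) the Lévy measure of `X`. -/
def IsPosLevyMeasure (P : Measure Ω) (X : ℝ → Ω → ℝ) (ν : Measure ℝ) : Prop :=
  ν (Set.Iic 0) = 0 ∧ ∀ x : ℝ, 0 < x → ν (Set.Ioi x) = jumpTailE P X x

/-! ### Ruin quantities -/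

/-- Ruin event `{τ(u) < ∞}`. -/
def ruinSet (X : ℝ → Ω → ℝ) (u : ℝ) : Set Ω := {ω | ∃ t, 0 ≤ t ∧ u < X t ω}

/-- Ruin time `τ(u) = inf{t ≥ 0 : X_t > u}` (junk value on `{τ(u) = ∞}`). -/
def tauT (X : ℝ → Ω → ℝ) (u : ℝ) (ω : Ω) : ℝ := sInf {t | 0 ≤ t ∧ u < X t ω}

/-- The conditional probability measure `P^{(u)} = P(· | τ(u) < ∞)`. -/
def condRuin (P : Measure Ω) (X : ℝ → Ω → ℝ) (u : ℝ) : Measure Ω :=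
  ProbabilityTheory.cond P (ruinSet X u)

/-- The event `{τ(0) < ∞}` for the process started at `z`. -/
def shiftRuin (X : ℝ → Ω → ℝ) (z : ℝ) : Set Ω := {ω | ∃ s, 0 ≤ s ∧ 0 < z + X s ω}

/-- The constant `c₁ = -log E e^{α X_1}`. -/
def c1 (P : Measure Ω) (X : ℝ → Ω → ℝ) (α : ℝ) : ℝ :=
  -Real.log (∫ ω, Real.exp (α * X 1 ω) ∂P)

/-- The constant `c₂ = (1 + α ∫_0^∞ e^{α z} P(τ(z) < ∞) dz)⁻¹`. -/
def c2 (P : Measure Ω) (X : ℝ → Ω → ℝ) (α : ℝ) : ℝ :=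
  (1 + α * ∫ z in Set.Ioi (0:ℝ), Real.exp (α * z) * (P (ruinSet X z)).toReal)⁻¹

/-- The standing assumption: `X` is a Lévy process, not the negative of a subordinator,
`Π̄⁺_X ∈ S^(α)` and `E e^{α X_1} < 1` for some `α > 0`. -/
structure Standing (P : Measure Ω) (X : ℝ → Ω → ℝ) (α : ℝ) : Prop where
  levy : IsLevy P X
  notNegSub : NotNegSubordinator P X
  posAlpha : 0 < α
  tailS : TailInSalpha α (jumpTail P X)
  expInt : Integrable (fun ω => Real.exp (α * X 1 ω)) P
  expLT : ∫ ω, Real.exp (α * X 1 ω) ∂P < 1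

/-! ### Killed paths: the Skorohod space with cemetery state

Here `EReal` serves as `ℝ ∪ {Δ}`, with `⊥` playing the role of the cemetery `Δ`. -/

/-- The path `w` killed at time `r`. -/
def kill (w : ℝ → ℝ) (r : ℝ) : ℝ → EReal := fun t => if t < r then (w t : EReal) else ⊥

/-- A real path viewed as a never-killed path in the extended state space. -/
def alive (w : ℝ → ℝ) : ℝ → EReal := fun t => (w t : EReal)

/-- Death time `τ_Δ` of a killed path. -/
def deathTime (v : ℝ → EReal) : ℝ := sInf {t | 0 < t ∧ v t = ⊥}

/-- The value `w_{τ_Δ(w)-}` of a killed path immediately prior to its death time. -/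
def preDeath (v : ℝ → EReal) : ℝ :=
  Function.leftLim (fun t => (v t).toReal) (deathTime v)

/-- `G(w,z) = E_z[H(w,X); τ(0) < ∞]`. -/
def GFun (P : Measure Ω) (X : ℝ → Ω → ℝ)
    (H : (ℝ → EReal) → (ℝ → EReal) → ℝ) (v : ℝ → EReal) (z : ℝ) : ℝ :=
  ∫ ω in shiftRuin X z, H v (alive fun t => z + X t ω) ∂P

/-- The class `𝓗` of functionals `H` on pairs of killed paths: product measurable,
satisfying the growth condition (f1) (note `e^{θ w⁻ 1(w⁻ ≤ 0)} = e^{θ min(w⁻,0)}`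
where `w⁻ = w_{τ_Δ(w)-}`), and the a.e. continuity condition (f2) on
`G(w,z) = E_z[H(w,X); τ(0) < ∞]`. -/
structure MemH (P : Measure Ω) (X : ℝ → Ω → ℝ) (α : ℝ)
    (H : (ℝ → EReal) → (ℝ → EReal) → ℝ) : Prop where
  meas : Measurable (Function.uncurry H)
  f1 : ∃ θ : ℝ, 0 ≤ θ ∧ θ < α ∧ ∃ C : ℝ, ∀ v v' : ℝ → EReal,
    |H v v'| * Real.exp (θ * min (preDeath v) 0) ≤ C
  f2 : ∀ v : ℝ → EReal, ∀ᵐ z ∂(volume : Measure ℝ), ContinuousAt (GFun P X H v) z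

/-- The post-passage path `t ↦ X_{τ(u-x)+t} - u`. -/
def postPath (X : ℝ → Ω → ℝ) (u x : ℝ) (ω : Ω) : ℝ → ℝ :=
  fun t => X (tauT X (u - x) ω + t) ω - u

/-! ### The limit objects `ρ`, `Z`, `W` -/

/-- The exponential distribution with parameter `r`. -/
def expMeasure (r : ℝ) : Measure ℝ :=
  (volume.restrict (Set.Ici (0:ℝ))).withDensity fun t => ENNReal.ofReal (r * Real.exp (-r * t))

/-- The law of the process `W`:
`P(W ∈ dw) = c₂ ∫_ℝ α e^{-α z} P_z(X ∈ dw ; τ(0) < ∞) dz`. -/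
def lawW (P : Measure Ω) (X : ℝ → Ω → ℝ) (α : ℝ) : Measure (ℝ → ℝ) :=
  Measure.bind
    ((volume : Measure ℝ).withDensity fun z =>
      ENNReal.ofReal (c2 P X α * α * Real.exp (-α * z)))
    fun z => Measure.map (fun ω => fun t => z + X t ω) (P.restrict (shiftRuin X z))

/-- `Z` is the Esscher transform of `X`: for each `s ≥ 0` the law of the stopped path
`Z_{· ∧ s}` has density `e^{c₁ s} e^{α X_s}` with respect to the law of `X_{· ∧ s}`. -/
def IsEsscher (P : Measure Ω) (X : ℝ → Ω → ℝ) (α : ℝ)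
    {Ω' : Type*} [MeasurableSpace Ω'] (P' : Measure Ω') (Z : ℝ → Ω' → ℝ) : Prop :=
  ∀ s : ℝ, 0 ≤ s →
    Measure.map (fun ω' => fun t => Z (min t s) ω') P' =
      Measure.map (fun ω => fun t => X (min t s) ω)
        (P.withDensity fun ω => ENNReal.ofReal (Real.exp (c1 P X α * s + α * X s ω)))

/-- The triple `(ρ, Z, W)` of (mutually independent) limit objects, realized on an
auxiliary probability space `(Ω', P')`. -/
structure LimitObjects (P : Measure Ω) (X : ℝ → Ω → ℝ) (α : ℝ)
    {Ω' : Type*} [MeasurableSpace Ω'] (P' : Measure Ω')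
    (ρ : Ω' → ℝ) (Z W : ℝ → Ω' → ℝ) : Prop where
  isProb : IsProbabilityMeasure P'
  rhoLaw : Measure.map ρ P' = expMeasure (c1 P X α)
  zLaw : IsEsscher P X α P' Z
  wLaw : Measure.map (fun ω' => path W ω') P' = lawW P X α
  cadlagZ : ∀ᵐ ω' ∂P', Cadlag (path Z ω')
  cadlagW : ∀ᵐ ω' ∂P', Cadlag (path W ω')
  indepRho : IndepFun ρ (fun ω' => (path Z ω', path W ω')) P'
  indepZW : IndepFun (fun ω' => path Z ω') (fun ω' => path W ω') P'

/-- The pair `(ρ, W)` of independent limit objects (when `Z` is not needed). -/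
structure WRhoObjects (P : Measure Ω) (X : ℝ → Ω → ℝ) (α : ℝ)
    {Ω' : Type*} [MeasurableSpace Ω'] (P' : Measure Ω')
    (ρ : Ω' → ℝ) (W : ℝ → Ω' → ℝ) : Prop where
  isProb : IsProbabilityMeasure P'
  rhoLaw : Measure.map ρ P' = expMeasure (c1 P X α)
  wLaw : Measure.map (fun ω' => path W ω') P' = lawW P X α
  cadlagW : ∀ᵐ ω' ∂P', Cadlag (path W ω')
  indep : IndepFun ρ (fun ω' => path W ω') P'

/-! ### The measures `μ_K` and `ν_x` on path space -/

/-- Path marginal of the measure `μ_K`: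
`μ_K(dw) = c₁ ∫_0^∞ 1(X_{t-} < K) e^{α X_{t-}} P(X_{[0,t)} ∈ dw) dt`. -/
def muK (P : Measure Ω) (X : ℝ → Ω → ℝ) (α K : ℝ) : Measure (ℝ → EReal) :=
  Measure.bind (volume.restrict (Set.Ici (0:ℝ))) fun t =>
    Measure.map (fun ω => kill (path X ω) t)
      (P.withDensity fun ω =>
        if preVal (path X ω) t < K then
          ENNReal.ofReal (c1 P X α * Real.exp (α * preVal (path X ω) t)) else 0)

/-- Path marginal of the measure `μ = μ_∞`:
`μ(dw) = c₁ ∫_0^∞ e^{α X_{t-}} P(X_{[0,t)} ∈ dw) dt`. -/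
def muMeasure (P : Measure Ω) (X : ℝ → Ω → ℝ) (α : ℝ) : Measure (ℝ → EReal) :=
  Measure.bind (volume.restrict (Set.Ici (0:ℝ))) fun t =>
    Measure.map (fun ω => kill (path X ω) t)
      (P.withDensity fun ω =>
        ENNReal.ofReal (c1 P X α * Real.exp (α * preVal (path X ω) t)))

/-- Path marginal of the measure `ν_x`:
`ν_x(dw') = c₂ ∫ 1(z > -x) α e^{-α z} P_z(X ∈ dw'; τ(0) < ∞) dz`. -/
def nuX (P : Measure Ω) (X : ℝ → Ω → ℝ) (α x : ℝ) : Measure (ℝ → EReal) :=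
  Measure.bind
    ((volume : Measure ℝ).withDensity fun z =>
      if -x < z then ENNReal.ofReal (c2 P X α * α * Real.exp (-α * z)) else 0)
    fun z => Measure.map (fun ω => alive fun t => z + X t ω) (P.restrict (shiftRuin X z))

/-- The potential measure `V_X(dζ) = ∫_0^∞ P(X_t ∈ dζ) dt`. -/
def potential (P : Measure Ω) (X : ℝ → Ω → ℝ) : Measure ℝ :=
  Measure.bind (volume.restrict (Set.Ici (0:ℝ))) fun t => Measure.map (X t) P

/-! Conditioning on `ρ = r`, independence writes the law of the killed path as
`∫ c₁ e^{-c₁ r} Law(Z_{[0,r)}) dr`. Killing at `r` only sees `Z` stopped at `r`, so the Esscher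
density `e^{c₁ r + α X_r}` turns this into `c₁ ∫ E[e^{α X_r}; X_{[0,r)} ∈ ·] dr`. A Lévy process
has no fixed jump times, so `X_r = X_{r-}` a.s. for every `r > 0`, and this is `μ`. -/

open scoped Topology

section GeneralMeasureTheory

variable {α β γ : Type*} [MeasurableSpace α] [MeasurableSpace β] [MeasurableSpace γ]

lemma _root_.MeasureTheory.withDensity_ne_zero {μ : Measure α} [NeZero μ] {f : α → ℝ≥0∞}
    (hf : AEMeasurable f μ) (hpos : ∀ a, f a ≠ 0) : μ.withDensity f ≠ 0 := fun h =>
  let ⟨a, ha⟩ := ((withDensity_eq_zero_iff hf).1 h).exists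
  hpos a ha

lemma _root_.MeasureTheory.withDensity_bind {μ : Measure α} {f : α → ℝ≥0∞} (hf : Measurable f)
    {κ : α → Measure β} (hκ : Measurable κ) :
    (μ.withDensity f).bind κ = μ.bind fun a => f a • κ a := by
  have hfκ : Measurable fun a => f a • κ a :=
    Measure.measurable_of_measurable_coe _ fun s hs => by
      simp only [Measure.smul_apply, smul_eq_mul]
      exact hf.mul ((Measure.measurable_coe hs).comp hκ)
  ext s hs
  rw [Measure.bind_apply hs hκ.aemeasurable, Measure.bind_apply hs hfκ.aemeasurable]
  exact lintegral_withDensity_eq_lintegral_mul _ hf ((Measure.measurable_coe hs).comp hκ)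

lemma _root_.MeasureTheory.measurable_map_of_uncurry {ν : Measure β} [SFinite ν]
    {F : α → β → γ} (hF : Measurable (Function.uncurry F)) : Measurable fun a => ν.map (F a) := by
  have h : (fun a => ν.map (F a)) = fun a => (ν.map (Prod.mk a)).map (Function.uncurry F) :=
    funext fun a => by rw [Measure.map_map hF measurable_prodMk_left]; rfl
  rw [h]
  exact (Measure.measurable_map _ hF).comp Measurable.map_prodMk_left

lemma _root_.MeasureTheory.Measure.map_prod_eq_bind {μ : Measure α} {ν : Measure β} [SFinite ν]
    {F : α → β → γ} (hF : Measurable (Function.uncurry F)) :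
    (μ.prod ν).map (Function.uncurry F) = μ.bind fun a => ν.map (F a) := by
  ext s hs
  rw [Measure.map_apply hF hs, Measure.prod_apply (hF hs),
    Measure.bind_apply hs (measurable_map_of_uncurry hF).aemeasurable]
  congr 1
  funext a
  exact (Measure.map_apply (hF.comp measurable_prodMk_left) hs).symm

lemma _root_.ProbabilityTheory.IndepFun.map_eq_bind {Ω : Type*} [MeasurableSpace Ω]
    {μ : Measure Ω} [IsFiniteMeasure μ] {f : Ω → α} {g : Ω → β} (hfg : IndepFun f g μ)
    (hf : AEMeasurable f μ) (hg : AEMeasurable g μ) {F : α → β → γ} (hF : Measurable (Function.uncurry F)) :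
    μ.map (fun ω => F (f ω) (g ω)) = (μ.map f).bind fun a => (μ.map g).map (F a) := by
  rw [← Measure.map_prod_eq_bind hF, ← hfg.map_prod_eq_prod_map_map hf hg,
    AEMeasurable.map_map_of_aemeasurable hF.aemeasurable (hf.prodMk hg)]
  rfl

lemma _root_.MeasureTheory.aemeasurable_of_aemeasurable_stopped {Ω : Type*} [MeasurableSpace Ω]
    {μ : Measure Ω} {Y : Ω → ℝ → β} (h : ∀ n : ℕ, AEMeasurable (fun ω t => Y ω (min t n)) μ) :
    AEMeasurable Y μ := by
  refine ⟨fun ω t => (h ⌈t⌉₊).mk _ ω t,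
    measurable_pi_lambda _ fun t => (measurable_pi_apply t).comp (h ⌈t⌉₊).measurable_mk, ?_⟩
  filter_upwards [ae_all_iff.2 fun n => (h n).ae_eq_mk] with ω hω
  funext t
  simpa [min_eq_left (Nat.le_ceil t)] using congrFun (hω ⌈t⌉₊) t

end GeneralMeasureTheory

lemma expMeasure_ne_zero {r : ℝ} (hr : 0 < r) : expMeasure r ≠ 0 := by
  have : NeZero (volume.restrict (Ici (0:ℝ))) := ⟨by simp [Measure.restrict_eq_zero]⟩
  exact withDensity_ne_zero (by fun_prop) fun t => (ENNReal.ofReal_pos.2 (by positivity)).ne'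

lemma c1_pos {P : Measure Ω} [NeZero P] {X : ℝ → Ω → ℝ} {α : ℝ}
    (hint : Integrable (fun ω => Real.exp (α * X 1 ω)) P)
    (hlt : ∫ ω, Real.exp (α * X 1 ω) ∂P < 1) : 0 < c1 P X α :=
  neg_pos.2 (Real.log_neg (integral_exp_pos hint) hlt)

lemma kill_stop (w : ℝ → ℝ) (r : ℝ) : kill (fun t => w (min t r)) r = kill w r := by
  funext v
  by_cases h : v < r
  · simp [kill, h, min_eq_left h.le]
  · simp [kill, h]

lemma measurable_kill_uncurry : Measurable fun p : ℝ × (ℝ → ℝ) => kill p.2 p.1 :=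
  measurable_pi_lambda _ fun v =>
    Measurable.ite (measurableSet_lt measurable_const measurable_fst)
      (measurable_coe_real_ereal.comp ((measurable_pi_apply v).comp measurable_snd))
      measurable_const

lemma measurable_kill (r : ℝ) : Measurable fun w : ℝ → ℝ => kill w r :=
  measurable_kill_uncurry.comp (measurable_const.prodMk measurable_id)

namespace IsLevy

variable {P : Measure Ω} {X : ℝ → Ω → ℝ}

lemma tendstoInMeasure_zero_of_tendsto_nhdsGE (hX : IsLevy P X) {u : ℕ → ℝ}
    (hu : Tendsto u atTop (𝓝[≥] 0)) : TendstoInMeasure P (fun n => X (u n)) atTop 0 := by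
  have := hX.isProb
  refine tendstoInMeasure_of_tendsto_ae (fun n => (hX.meas _).aestronglyMeasurable) ?_
  filter_upwards [hX.cadlag, hX.init] with ω hcad h0
  simpa [path, h0, Function.comp_def] using (hcad.1 0 le_rfl).tendsto.comp hu

lemma tendstoInMeasure_of_tendsto_of_le (hX : IsLevy P X) {s : ℕ → ℝ} {t : ℝ}
    (hs0 : ∀ n, 0 ≤ s n) (hst : ∀ n, s n ≤ t) (hs : Tendsto s atTop (𝓝 t)) :
    TendstoInMeasure P (fun n => X (s n)) atTop (X t) := by
  have hu : Tendsto (fun n => t - s n) atTop (𝓝[≥] 0) :=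
    tendsto_nhdsWithin_iff.2 ⟨by simpa using (tendsto_const_nhds (x := t)).sub hs,
      .of_forall fun n => sub_nonneg.2 (hst n)⟩
  intro ε hε
  refine (hX.tendstoInMeasure_zero_of_tendsto_nhdsGE hu ε hε).congr fun n => ?_
  have hlaw := hX.stationary (s n) (t - s n) (hs0 n) (sub_nonneg.2 (hst n))
  rw [add_sub_cancel] at hlaw
  have hS : MeasurableSet {x : ℝ | ε ≤ edist x 0} :=
    measurableSet_le measurable_const (measurable_id.edist measurable_const)
  calc P {ω | ε ≤ edist (X (t - s n) ω) ((0 : Ω → ℝ) ω)}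
      = P.map (X (t - s n)) {x | ε ≤ edist x 0} := (Measure.map_apply (hX.meas _) hS).symm
    _ = P.map (fun ω => X t ω - X (s n) ω) {x | ε ≤ edist x 0} := by rw [hlaw]
    _ = P {ω | ε ≤ edist (X (s n) ω) (X t ω)} := by
        rw [Measure.map_apply (f := fun ω => X t ω - X (s n) ω) ((hX.meas t).sub (hX.meas _)) hS]
        simp [edist_dist, Real.dist_eq, abs_sub_comm]

lemma leftLim_ae_eq (hX : IsLevy P X) {t : ℝ} (ht : 0 < t) :
    (fun ω => Function.leftLim (path X ω) t) =ᵐ[P] X t := by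
  have := hX.isProb
  obtain ⟨s, -, hs_mem, hs⟩ := exists_seq_strictMono_tendsto' ht
  have hs_left : Tendsto s atTop (𝓝[<] t) :=
    tendsto_nhdsWithin_iff.2 ⟨hs, .of_forall fun n => (hs_mem n).2⟩
  have hae : ∀ᵐ ω ∂P, Tendsto (fun n => X (s n) ω) atTop
      (𝓝 (Function.leftLim (path X ω) t)) := by
    filter_upwards [hX.cadlag] with ω hcad
    obtain ⟨l, hl⟩ := hcad.2 t ht
    rw [leftLim_eq_of_tendsto hl]
    exact hl.comp hs_left
  exact tendstoInMeasure_ae_unique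
    (tendstoInMeasure_of_tendsto_ae (fun n => (hX.meas (s n)).aestronglyMeasurable) hae)
    (hX.tendstoInMeasure_of_tendsto_of_le (fun n => (hs_mem n).1.le) (fun n => (hs_mem n).2.le) hs)

end IsLevy

namespace IsEsscher

variable {P : Measure Ω} [NeZero P] {X : ℝ → Ω → ℝ} {α : ℝ}
  {Ω' : Type*} [MeasurableSpace Ω'] {P' : Measure Ω'} {Z : ℝ → Ω' → ℝ}

lemma aemeasurable_stopped (hZ : IsEsscher P X α P' Z) (hX : ∀ t, Measurable (X t)) {s : ℝ}
    (hs : 0 ≤ s) : AEMeasurable (fun ω' t => Z (min t s) ω') P' := by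
  refine .of_map_ne_zero ?_
  rw [hZ s hs, Measure.map_ne_zero_iff (measurable_pi_lambda _ fun t => hX _).aemeasurable]
  exact withDensity_ne_zero (by fun_prop) fun ω => (ENNReal.ofReal_pos.2 (Real.exp_pos _)).ne'

lemma aemeasurable_path (hZ : IsEsscher P X α P' Z) (hX : ∀ t, Measurable (X t)) :
    AEMeasurable (path Z) P' :=
  aemeasurable_of_aemeasurable_stopped fun n => hZ.aemeasurable_stopped hX n.cast_nonneg

lemma map_kill (hZ : IsEsscher P X α P' Z) (hX : ∀ t, Measurable (X t)) {r : ℝ} (hr : 0 ≤ r) :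
    (P'.map (path Z)).map (fun w => kill w r) =
      (P.withDensity fun ω => ENNReal.ofReal (Real.exp (c1 P X α * r + α * X r ω))).map
        fun ω => kill (path X ω) r := by
  have hstop : Measurable fun (w : ℝ → ℝ) t => w (min t r) :=
    measurable_pi_lambda _ fun t => measurable_pi_apply _
  have hkill : (fun w => kill w r) = (fun w => kill w r) ∘ fun (w : ℝ → ℝ) t => w (min t r) :=
    funext fun w => (kill_stop w r).symm
  rw [hkill, ← Measure.map_map (measurable_kill r) hstop,
    AEMeasurable.map_map_of_aemeasurable hstop.aemeasurable (hZ.aemeasurable_path hX),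
    show ((fun (w : ℝ → ℝ) t => w (min t r)) ∘ path Z) = fun ω' t => Z (min t r) ω' from rfl,
    hZ r hr, Measure.map_map (measurable_kill r) (measurable_pi_lambda _ fun t => hX _)]
  exact congrArg (fun f => Measure.map f _) (funext fun ω => kill_stop (path X ω) r)

end IsEsscher

theorem esscher_killed_law_general
    {Ω Ω' : Type*} [MeasurableSpace Ω] [MeasurableSpace Ω']
    (P : Measure Ω) (X : ℝ → Ω → ℝ) (α : ℝ)
    (hlevy : IsLevy P X)
    (hint : Integrable (fun ω => Real.exp (α * X 1 ω)) P)
    (hlt : ∫ ω, Real.exp (α * X 1 ω) ∂P < 1)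
    (P' : Measure Ω') (hP' : IsProbabilityMeasure P')
    (ρ : Ω' → ℝ) (Z : ℝ → Ω' → ℝ)
    (hρ : Measure.map ρ P' = expMeasure (c1 P X α))
    (hZ : IsEsscher P X α P' Z)
    (hindep : IndepFun ρ (fun ω' => path Z ω') P') :
    Measure.map (fun ω' => kill (path Z ω') (ρ ω')) P' = muMeasure P X α := by
  have := hlevy.isProb
  have hc : 0 < c1 P X α := c1_pos hint hlt
  have hρm : AEMeasurable ρ P' := .of_map_ne_zero (hρ ▸ expMeasure_ne_zero hc)
  have hZm : AEMeasurable (path Z) P' := hZ.aemeasurable_path hlevy.meas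
  rw [hindep.map_eq_bind (F := fun r w => kill w r) hρm hZm measurable_kill_uncurry, hρ,
    expMeasure, withDensity_bind (by fun_prop) (measurable_map_of_uncurry measurable_kill_uncurry),
    muMeasure, ← restrict_Ioi_eq_restrict_Ici]
  refine Measure.bind_congr_right ?_
  filter_upwards [ae_restrict_mem measurableSet_Ioi] with r (hr : 0 < r)
  rw [hZ.map_kill hlevy.meas hr.le, ← Measure.map_smul,
    ← withDensity_smul' _ _ ENNReal.ofReal_ne_top]
  congr 1
  refine withDensity_congr_ae ?_
  filter_upwards [hlevy.leftLim_ae_eq hr] with ω hω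
  rw [Pi.smul_apply, smul_eq_mul, ← ENNReal.ofReal_mul (by positivity), preVal, if_pos hr, hω,
    mul_assoc, ← Real.exp_add]
  congr 3
  ring

/-- **Proposition 4.1 (Identification of the pre-jump limit law).**  Assume
`E e^{α X_1} < 1` for some `α > 0`.  If `Z` is the Esscher transform of `X` and `ρ` an
independent exponential time with parameter `c₁`, then the law of the killed path
`{Z_t : t < ρ}` is the path marginal `μ(dw)` of the probability measure `μ`. -/
theorem esscher_killed_law
    {Ω Ω' : Type*} [MeasurableSpace Ω] [MeasurableSpace Ω']
    (P : Measure Ω) (X : ℝ → Ω → ℝ) (α : ℝ) (hα : 0 < α)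
    (hlevy : IsLevy P X)
    (hint : Integrable (fun ω => Real.exp (α * X 1 ω)) P)
    (hlt : ∫ ω, Real.exp (α * X 1 ω) ∂P < 1)
    (P' : Measure Ω') (hP' : IsProbabilityMeasure P')
    (ρ : Ω' → ℝ) (Z : ℝ → Ω' → ℝ)
    (hρ : Measure.map ρ P' = expMeasure (c1 P X α))
    (hZ : IsEsscher P X α P' Z)
    (hindep : IndepFun ρ (fun ω' => path Z ω') P') :
    Measure.map (fun ω' => kill (path Z ω') (ρ ω')) P' = muMeasure P X α :=
  esscher_killed_law_general P X α hlevy hint hlt P' hP' ρ Z hρ hZ hindep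

end GriffinMaller
end
end

section
/- Weak convergence of the shifted, rescaled Lévy tail (equation (4.17)). Let ν be a measure on (0,∞), finite on (c,∞) for every c>0 and nonzero on some (x₀,∞), whose tail ν̄(x)=ν((x,∞)) satisfies ν̄(u+x)/ν̄(u) → e^{−αx} as u→∞ for every x∈ℝ, for some α>0. Then for each fixed φ∈ℝ and x≥0, the finite measures B ↦ ν(u−φ+B)/ν̄(u) on (−x,∞) converge weakly, as u→∞, to the measure e^{αφ} α e^{−αz} dz on (−x,∞); equivalently, for every bounded function g on (−x,∞) that is continuous almost everywhere, ∫_{z>−x} g(z) ν(u−φ+dz)/ν̄(u) → e^{αφ} ∫_{−x}^∞ g(z) α e^{−αz} dz. -/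
/-!
Shifting `ν` by `u - φ` and dividing by `ν̄(u)` gives measures whose tails converge, by the tail
condition, to `e^{αφ} e^{-αy}`: the tail of the limit measure `e^{αφ} α e^{-αz} dz`, which is
strictly decreasing. Each of these measures, restricted to `(-x, ∞)`, is the image of Lebesgue
measure on an interval under the generalised inverse of its tail, and convergence of the tails to a
strictly decreasing limit forces pointwise convergence of these inverses. For bounded `g`,
continuous almost everywhere, the composed integrands then converge almost everywhere, and
dominated convergence concludes.
-/

open MeasureTheory ProbabilityTheory Filter Set Real
open scoped ENNReal NNReal

noncomputable section

namespace GriffinMaller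

/-! ### Lévy processes -/

variable {Ω : Type*} [MeasurableSpace Ω]

open scoped Topology

section TailQuantile

variable {μ : Measure ℝ} {a s : ℝ}

lemma measure_Ioi_ne_top_of_le (hfin : μ (Ioi a) ≠ ⊤) {y : ℝ} (hy : a ≤ y) :
    μ (Ioi y) ≠ ⊤ :=
  ne_top_of_le_ne_top hfin (measure_mono (Ioi_subset_Ioi hy))

lemma antitoneOn_mtail (hfin : μ (Ioi a) ≠ ⊤) : AntitoneOn (mtail μ) (Ici a) :=
  fun _ hy _ _ hyy' =>
    ENNReal.toReal_mono (measure_Ioi_ne_top_of_le hfin hy) (measure_mono (Ioi_subset_Ioi hyy'))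

lemma tendsto_mtail_atTop (hfin : μ (Ioi a) ≠ ⊤) : Tendsto (mtail μ) atTop (𝓝 0) := by
  have hlim := tendsto_measure_iInter_atTop (μ := μ) (s := Ioi)
    (fun _ => measurableSet_Ioi.nullMeasurableSet) (fun _ _ h => Ioi_subset_Ioi h) ⟨a, hfin⟩
  have hempty : ⋂ y : ℝ, Ioi y = ∅ := iInter_eq_empty_iff.2 fun z => ⟨z, lt_irrefl z⟩
  rw [hempty, measure_empty] at hlim
  have h := (ENNReal.tendsto_toReal ENNReal.zero_ne_top).comp hlim
  rw [ENNReal.toReal_zero] at h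
  exact h

/-- Right continuity of the tail. -/
lemma exists_gt_lt_mtail {y : ℝ} (hfin : μ (Ioi y) ≠ ⊤) (h : s < mtail μ y) :
    ∃ y' > y, s < mtail μ y' := by
  have hunion : ⋃ n : ℕ, Ioi (y + 1 / ((n : ℝ) + 1)) = Ioi y := by
    ext z
    simp only [mem_iUnion, mem_Ioi]
    refine ⟨fun ⟨n, hn⟩ => lt_trans (lt_add_of_pos_right y Nat.one_div_pos_of_nat) hn,
      fun hz => ?_⟩
    obtain ⟨n, hn⟩ := exists_nat_one_div_lt (sub_pos.2 hz)
    exact ⟨n, by linarith⟩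
  have hmono : Monotone fun n : ℕ => Ioi (y + 1 / ((n : ℝ) + 1)) := fun n m hnm =>
    Ioi_subset_Ioi (add_le_add_right (Nat.one_div_le_one_div hnm) y)
  have hlim := tendsto_measure_iUnion_atTop (μ := μ) hmono
  rw [hunion] at hlim
  obtain ⟨n, hn⟩ :=
    (((ENNReal.tendsto_toReal hfin).comp hlim).eventually_const_lt h).exists
  exact ⟨_, lt_add_of_pos_right y Nat.one_div_pos_of_nat, hn⟩

lemma bddAbove_setOf_lt_mtail (hfin : μ (Ioi a) ≠ ⊤) (hs : 0 < s) :
    BddAbove {y | s < mtail μ y} := by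
  obtain ⟨b, hb, hab⟩ :=
    (((tendsto_mtail_atTop hfin).eventually_lt_const hs).and (eventually_ge_atTop a)).exists
  refine ⟨b, fun y hy => ?_⟩
  by_contra! hby
  exact (hy.trans_le (antitoneOn_mtail hfin hab (hab.trans hby.le) hby.le)).not_gt hb

/-- Generalised inverse of the tail `mtail μ` on `[a, ∞)`; only meaningful for `0 < s`, where the
set is bounded above (otherwise `sSup` returns a junk value). -/
def tailQuantile (μ : Measure ℝ) (a s : ℝ) : ℝ := sSup (insert a {y | s < mtail μ y})

lemma le_tailQuantile (hfin : μ (Ioi a) ≠ ⊤) (hs : 0 < s) : a ≤ tailQuantile μ a s :=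
  le_csSup ((bddAbove_setOf_lt_mtail hfin hs).insert a) (mem_insert a _)

lemma lt_tailQuantile_iff (hfin : μ (Ioi a) ≠ ⊤) (hs : 0 < s) {y : ℝ} (hy : a ≤ y) :
    y < tailQuantile μ a s ↔ s < mtail μ y := by
  constructor
  · intro h
    obtain ⟨y', hy', hyy'⟩ := exists_lt_of_lt_csSup (insert_nonempty _ _) h
    rcases hy' with rfl | hy'
    · exact absurd hyy' hy.not_gt
    · exact hy'.trans_le (antitoneOn_mtail hfin hy (hy.trans hyy'.le) hyy'.le)
  · intro h
    obtain ⟨y', hyy', hy'⟩ := exists_gt_lt_mtail (measure_Ioi_ne_top_of_le hfin hy) h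
    exact hyy'.trans_le (le_csSup ((bddAbove_setOf_lt_mtail hfin hs).insert a)
      (mem_insert_of_mem a hy'))

lemma antitoneOn_tailQuantile (hfin : μ (Ioi a) ≠ ⊤) :
    AntitoneOn (tailQuantile μ a) (Ioi 0) :=
  fun _ hs _ _ hss' => csSup_le_csSup ((bddAbove_setOf_lt_mtail hfin hs).insert a)
    (insert_nonempty _ _) (insert_subset_insert fun _ hy => hss'.trans_lt hy)

lemma aemeasurable_tailQuantile (hfin : μ (Ioi a) ≠ ⊤) (m : ℝ) :
    AEMeasurable (tailQuantile μ a) (volume.restrict (Ioo 0 m)) :=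
  aemeasurable_restrict_of_antitoneOn measurableSet_Ioo
    ((antitoneOn_tailQuantile hfin).mono Ioo_subset_Ioi_self)

lemma preimage_tailQuantile_Ioi_inter (hfin : μ (Ioi a) ≠ ⊤) (y : ℝ) :
    tailQuantile μ a ⁻¹' Ioi y ∩ Ioo 0 (mtail μ a) = Ioo 0 (mtail μ (max y a)) := by
  ext s
  simp only [mem_inter_iff, mem_preimage, mem_Ioi, mem_Ioo]
  constructor
  · rintro ⟨hq, hs, hsm⟩
    refine ⟨hs, ?_⟩
    rcases le_total a y with hay | hya
    · rwa [max_eq_left hay, ← lt_tailQuantile_iff hfin hs hay]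
    · rwa [max_eq_right hya]
  · rintro ⟨hs, hsm⟩
    have hsm' : s < mtail μ a :=
      hsm.trans_le (antitoneOn_mtail hfin self_mem_Ici (le_max_right y a) (le_max_right y a))
    refine ⟨?_, hs, hsm'⟩
    rcases le_total a y with hay | hya
    · rwa [max_eq_left hay, ← lt_tailQuantile_iff hfin hs hay] at hsm
    · exact (lt_tailQuantile_iff hfin hs le_rfl).2 hsm' |>.trans_le' hya

lemma map_tailQuantile (hfin : μ (Ioi a) ≠ ⊤) :
    Measure.map (tailQuantile μ a) (volume.restrict (Ioo 0 (mtail μ a))) =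
      μ.restrict (Ioi a) := by
  have hQ := aemeasurable_tailQuantile hfin (mtail μ a)
  have : IsFiniteMeasure (μ.restrict (Ioi a)) := isFiniteMeasure_restrict.2 hfin
  refine (ext_of_generate_finite (range Ioi) (borel_eq_generateFrom_Ioi ℝ) isPiSystem_Ioi
    ?_ ?_).symm
  · rintro _ ⟨y, rfl⟩
    rw [Measure.restrict_apply measurableSet_Ioi, Ioi_inter_Ioi,
      Measure.map_apply_of_aemeasurable hQ measurableSet_Ioi,
      Measure.restrict_apply' measurableSet_Ioo, preimage_tailQuantile_Ioi_inter hfin,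
      Real.volume_Ioo, sub_zero, mtail,
      ENNReal.ofReal_toReal (measure_Ioi_ne_top_of_le hfin (le_max_right y a))]
  · rw [Measure.restrict_apply_univ, Measure.map_apply_of_aemeasurable hQ MeasurableSet.univ,
      preimage_univ, Measure.restrict_apply_univ, Real.volume_Ioo, sub_zero, mtail,
      ENNReal.ofReal_toReal hfin]

lemma setIntegral_Ioi_eq_integral_tailQuantile (hfin : μ (Ioi a) ≠ ⊤) {g : ℝ → ℝ}
    (hg : Measurable g) :
    ∫ z in Ioi a, g z ∂μ = ∫ s in Ioo 0 (mtail μ a), g (tailQuantile μ a s) := by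
  rw [← map_tailQuantile hfin, integral_map (aemeasurable_tailQuantile hfin _)
    hg.aestronglyMeasurable]

end TailQuantile

section QuantileConvergence

variable {ι : Type*} {l : Filter ι} {μs : ι → Measure ℝ} {μ : Measure ℝ} {a : ℝ}

lemma ne_top_of_mtail_pos (h : 0 < mtail μ a) : μ (Ioi a) ≠ ⊤ :=
  (ENNReal.toReal_pos_iff.1 h).2.ne

lemma mtail_pos_of_strictAntiOn (hanti : StrictAntiOn (mtail μ) (Ici a)) : 0 < mtail μ a :=
  ENNReal.toReal_nonneg.trans_lt
    (hanti self_mem_Ici (mem_Ici.2 (le_add_of_nonneg_right zero_le_one)) (lt_add_one a))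

lemma eventually_measure_Ioi_ne_top (hanti : StrictAntiOn (mtail μ) (Ici a))
    (htail : ∀ y, a ≤ y → Tendsto (fun i => mtail (μs i) y) l (𝓝 (mtail μ y))) :
    ∀ᶠ i in l, μs i (Ioi a) ≠ ⊤ :=
  ((htail a le_rfl).eventually (lt_mem_nhds (mtail_pos_of_strictAntiOn hanti))).mono
    fun _ => ne_top_of_mtail_pos

/-- Strict decrease of the limit tail rules out flat pieces, at whose levels the quantiles
could fail to converge. -/
lemma tendsto_tailQuantile (hanti : StrictAntiOn (mtail μ) (Ici a))
    (htail : ∀ y, a ≤ y → Tendsto (fun i => mtail (μs i) y) l (𝓝 (mtail μ y)))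
    {s : ℝ} (hs : 0 < s) :
    Tendsto (fun i => tailQuantile (μs i) a s) l (𝓝 (tailQuantile μ a s)) := by
  have hfin := ne_top_of_mtail_pos (mtail_pos_of_strictAntiOn hanti)
  have hfins := eventually_measure_Ioi_ne_top hanti htail
  have hq : a ≤ tailQuantile μ a s := le_tailQuantile hfin hs
  refine tendsto_order.2 ⟨fun b hb => ?_, fun b hb => ?_⟩
  · rcases lt_or_ge b a with hba | hab
    · filter_upwards [hfins] with i hi using hba.trans_le (le_tailQuantile hi hs)
    · filter_upwards [hfins, (htail b hab).eventually_const_lt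
        ((lt_tailQuantile_iff hfin hs hab).1 hb)] with i hi hib
      exact (lt_tailQuantile_iff hi hs hab).2 hib
  · obtain ⟨y₁, hqy₁, hy₁b⟩ := exists_between hb
    obtain ⟨y₂, hy₁₂, hy₂b⟩ := exists_between hy₁b
    have hay₁ : a ≤ y₁ := hq.trans hqy₁.le
    have hay₂ : a ≤ y₂ := hay₁.trans hy₁₂.le
    have hy₁ : mtail μ y₁ ≤ s :=
      not_lt.1 fun h => hqy₁.not_gt ((lt_tailQuantile_iff hfin hs hay₁).2 h)
    have hy₂ : mtail μ y₂ < s := (hanti hay₁ hay₂ hy₁₂).trans_le hy₁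
    filter_upwards [hfins, (htail y₂ hay₂).eventually_lt_const hy₂] with i hi hi₂
    exact (not_lt.1 fun h => hi₂.not_gt ((lt_tailQuantile_iff hi hs hay₂).1 h)).trans_lt hy₂b

lemma tendsto_indicator_tailQuantile (hanti : StrictAntiOn (mtail μ) (Ici a))
    (htail : ∀ y, a ≤ y → Tendsto (fun i => mtail (μs i) y) l (𝓝 (mtail μ y)))
    {g : ℝ → ℝ} {s : ℝ} (hsm : s ≠ mtail μ a)
    (hcont : s ∈ Ioo 0 (mtail μ a) → ContinuousAt g (tailQuantile μ a s)) :
    Tendsto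
      (fun i => (Ioo 0 (mtail (μs i) a)).indicator (fun t => g (tailQuantile (μs i) a t)) s) l
      (𝓝 ((Ioo 0 (mtail μ a)).indicator (fun t => g (tailQuantile μ a t)) s)) := by
  have hside : ∀ᶠ i in l, (s < mtail (μs i) a ↔ s < mtail μ a) := by
    rcases hsm.lt_or_gt with h | h
    · filter_upwards [(htail a le_rfl).eventually_const_lt h] with i hi using iff_of_true hi h
    · filter_upwards [(htail a le_rfl).eventually_lt_const h] with i hi
        using iff_of_false hi.not_gt h.not_gt
  have hev : ∀ᶠ i in l,
      (Ioo 0 (mtail (μs i) a)).indicator (fun t => g (tailQuantile (μs i) a t)) s =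
        (Ioo 0 (mtail μ a)).indicator (fun t => g (tailQuantile (μs i) a t)) s := by
    filter_upwards [hside] with i hi
    simp only [indicator, mem_Ioo, hi]
  refine Tendsto.congr' (hev.mono fun _ h => h.symm) ?_
  by_cases hs : s ∈ Ioo 0 (mtail μ a)
  · simp only [indicator_of_mem hs]
    exact (hcont hs).tendsto.comp (tendsto_tailQuantile hanti htail hs.1)
  · simp only [indicator_of_notMem hs]
    exact tendsto_const_nhds

/-- A portmanteau theorem via the quantile coupling: both sides become Lebesgue integrals of
`g ∘ tailQuantile` over intervals, and these integrands converge almost everywhere. -/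
theorem tendsto_setIntegral_Ioi_of_tendsto_mtail [l.IsCountablyGenerated]
    (hanti : StrictAntiOn (mtail μ) (Ici a))
    (htail : ∀ y, a ≤ y → Tendsto (fun i => mtail (μs i) y) l (𝓝 (mtail μ y)))
    {g : ℝ → ℝ} (hg : Measurable g) {C : ℝ} (hC : ∀ z, |g z| ≤ C)
    (hcont : ∀ᵐ z ∂μ.restrict (Ioi a), ContinuousAt g z) :
    Tendsto (fun i => ∫ z in Ioi a, g z ∂μs i) l (𝓝 (∫ z in Ioi a, g z ∂μ)) := by
  have hfin := ne_top_of_mtail_pos (mtail_pos_of_strictAntiOn hanti)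
  have hfins := eventually_measure_Ioi_ne_top hanti htail
  have hquantile : ∀ᶠ i in l, ∫ z in Ioi a, g z ∂μs i =
      ∫ s, (Ioo 0 (mtail (μs i) a)).indicator (fun t => g (tailQuantile (μs i) a t)) s := by
    filter_upwards [hfins] with i hi
    rw [setIntegral_Ioi_eq_integral_tailQuantile hi hg, integral_indicator measurableSet_Ioo]
  have hcontQ : ∀ᵐ s, s ∈ Ioo 0 (mtail μ a) → ContinuousAt g (tailQuantile μ a s) := by
    refine ae_imp_of_ae_restrict (ae_of_ae_map (aemeasurable_tailQuantile hfin _) ?_)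
    rwa [map_tailQuantile hfin]
  rw [setIntegral_Ioi_eq_integral_tailQuantile hfin hg, ← integral_indicator measurableSet_Ioo]
  refine (tendsto_integral_filter_of_dominated_convergence
    ((Ioo 0 (mtail μ a + 1)).indicator fun _ => C) ?_ ?_ ?_ ?_).congr'
    (hquantile.mono fun _ h => h.symm)
  · filter_upwards [hfins] with i hi
    exact (aestronglyMeasurable_indicator_iff measurableSet_Ioo).2
      (hg.comp_aemeasurable (aemeasurable_tailQuantile hi _)).aestronglyMeasurable
  · filter_upwards [(htail a le_rfl).eventually_lt_const (lt_add_one _)] with i hi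
    refine .of_forall fun s => ?_
    by_cases hs : s ∈ Ioo 0 (mtail (μs i) a)
    · have hs' : s ∈ Ioo 0 (mtail μ a + 1) := ⟨hs.1, hs.2.trans hi⟩
      rw [indicator_of_mem hs, indicator_of_mem hs', Real.norm_eq_abs]
      exact hC _
    · rw [indicator_of_notMem hs, norm_zero]
      exact indicator_nonneg (fun _ _ => (abs_nonneg _).trans (hC 0)) s
  · exact (integrable_indicator_iff measurableSet_Ioo).2 (integrableOn_const measure_Ioo_lt_top.ne)
  · filter_upwards [hcontQ, compl_mem_ae_iff.2 (measure_singleton (mtail μ a))] with s hs hsm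
    exact tendsto_indicator_tailQuantile hanti htail hsm hs

end QuantileConvergence

section ExponentialLimit

variable {α : ℝ}

def expDensityMeasure (α : ℝ) : Measure ℝ :=
  volume.withDensity fun z => ENNReal.ofReal (α * exp (-α * z))

lemma expDensityMeasure_Ioi (hα : 0 < α) (y : ℝ) :
    expDensityMeasure α (Ioi y) = ENNReal.ofReal (exp (-α * y)) := by
  have hint : IntegrableOn (fun z => α * exp (-α * z)) (Ioi y) :=
    (exp_neg_integrableOn_Ioi y hα).const_mul α
  rw [expDensityMeasure, withDensity_apply _ measurableSet_Ioi,
    ← ofReal_integral_eq_lintegral_ofReal hint (.of_forall fun z => by positivity),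
    integral_const_mul, integral_exp_mul_Ioi (neg_lt_zero.2 hα)]
  congr 1
  field_simp

lemma mtail_smul_expDensityMeasure (hα : 0 < α) {c : ℝ} (hc : 0 ≤ c) (y : ℝ) :
    mtail (ENNReal.ofReal c • expDensityMeasure α) y = c * exp (-α * y) := by
  rw [mtail, Measure.smul_apply, expDensityMeasure_Ioi hα, smul_eq_mul, ENNReal.toReal_mul,
    ENNReal.toReal_ofReal hc, ENNReal.toReal_ofReal (exp_pos _).le]

lemma strictAnti_mtail_smul_expDensityMeasure (hα : 0 < α) {c : ℝ} (hc : 0 < c) :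
    StrictAnti (mtail (ENNReal.ofReal c • expDensityMeasure α)) := by
  intro y y' hyy'
  rw [mtail_smul_expDensityMeasure hα hc.le, mtail_smul_expDensityMeasure hα hc.le]
  exact mul_lt_mul_of_pos_left (exp_lt_exp.2 (by nlinarith)) hc

lemma setIntegral_smul_expDensityMeasure (hα : 0 ≤ α) {c : ℝ} (hc : 0 ≤ c) (g : ℝ → ℝ)
    (a : ℝ) :
    ∫ z in Ioi a, g z ∂(ENNReal.ofReal c • expDensityMeasure α) =
      c * ∫ z in Ioi a, g z * (α * exp (-α * z)) := by
  rw [Measure.restrict_smul, integral_smul_measure, ENNReal.toReal_ofReal hc, smul_eq_mul,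
    expDensityMeasure, setIntegral_withDensity_eq_setIntegral_toReal_smul (by fun_prop)
      (.of_forall fun _ => ENNReal.ofReal_lt_top) g measurableSet_Ioi]
  congr 1
  refine setIntegral_congr_fun measurableSet_Ioi fun z _ => ?_
  rw [ENNReal.toReal_ofReal (by positivity), smul_eq_mul, mul_comm]

end ExponentialLimit

section ShiftedTail

variable {ν : Measure ℝ} {φ u : ℝ}

/-- The measure `ν(u - φ + ·) / ν̄(u)`. -/
def shiftedTailMeasure (ν : Measure ℝ) (φ u : ℝ) : Measure ℝ :=
  (ν (Ioi u))⁻¹ • ν.map fun ξ => ξ - (u - φ)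

lemma mtail_shiftedTailMeasure (y : ℝ) :
    mtail (shiftedTailMeasure ν φ u) y = mtail ν (u + (y - φ)) / mtail ν u := by
  have hpre : (fun ξ => ξ - (u - φ)) ⁻¹' Ioi y = Ioi (u + (y - φ)) := by
    ext ξ
    simp only [mem_preimage, mem_Ioi]
    constructor <;> intro h <;> linarith
  rw [mtail, shiftedTailMeasure, Measure.smul_apply, smul_eq_mul,
    Measure.map_apply (measurable_sub_const _) measurableSet_Ioi, hpre, ENNReal.toReal_mul,
    ENNReal.toReal_inv, inv_mul_eq_div, mtail, mtail]

lemma setIntegral_shiftedTailMeasure {g : ℝ → ℝ} (hg : Measurable g) (a : ℝ) :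
    ∫ z in Ioi a, g z ∂shiftedTailMeasure ν φ u =
      (∫ ξ in {ξ : ℝ | a < ξ - (u - φ)}, g (ξ - (u - φ)) ∂ν) / mtail ν u := by
  rw [shiftedTailMeasure, Measure.restrict_smul, integral_smul_measure,
    setIntegral_map measurableSet_Ioi hg.aestronglyMeasurable
      (measurable_sub_const _).aemeasurable, ENNReal.toReal_inv, smul_eq_mul, inv_mul_eq_div]
  rfl

end ShiftedTail

theorem shifted_tail_weak_convergence_general
    (α : ℝ) (hα : 0 < α) (ν : Measure ℝ)
    (hconv : ∀ y : ℝ, Tendsto (fun u => mtail ν (u + y) / mtail ν u) atTop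
      (nhds (Real.exp (-α * y))))
    (φ x : ℝ)
    (g : ℝ → ℝ) (hg_meas : Measurable g) (hg_bdd : ∃ C : ℝ, ∀ z, |g z| ≤ C)
    (hg_cont : ∀ᵐ z ∂(volume.restrict (Set.Ioi (-x))), ContinuousAt g z) :
    Tendsto (fun u =>
        (∫ ξ in {ξ : ℝ | -x < ξ - (u - φ)}, g (ξ - (u - φ)) ∂ν) / mtail ν u)
      atTop
      (nhds (Real.exp (α * φ) *
        ∫ z in Set.Ioi (-x), g z * (α * Real.exp (-α * z)))) := by
  obtain ⟨C, hC⟩ := hg_bdd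
  set limit := ENNReal.ofReal (exp (α * φ)) • expDensityMeasure α
  have htail : ∀ y, Tendsto (fun u => mtail (shiftedTailMeasure ν φ u) y) atTop
      (𝓝 (mtail limit y)) := by
    intro y
    rw [mtail_smul_expDensityMeasure hα (exp_pos _).le, ← exp_add,
      show α * φ + -α * y = -α * (y - φ) by ring]
    simpa only [mtail_shiftedTailMeasure] using hconv (y - φ)
  have hcont : ∀ᵐ z ∂limit.restrict (Ioi (-x)), ContinuousAt g z :=
    ((Measure.smul_absolutelyContinuous.trans
      (withDensity_absolutelyContinuous _ _)).restrict _).ae_le hg_cont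
  have h := tendsto_setIntegral_Ioi_of_tendsto_mtail
    ((strictAnti_mtail_smul_expDensityMeasure hα (exp_pos (α * φ))).strictAntiOn _)
    (fun y _ => htail y) hg_meas hC hcont
  simpa only [setIntegral_shiftedTailMeasure hg_meas,
    setIntegral_smul_expDensityMeasure hα.le (exp_pos _).le] using h

/-- **Equation (4.17) (Weak convergence of the shifted, rescaled Lévy tail).**  Let `ν`
be a measure on `(0,∞)`, finite on `(c,∞)` for every `c > 0` and nonzero on some
`(x₀,∞)`, with `ν̄(u+y)/ν̄(u) → e^{-αy}` for every `y`.  Then for fixed `φ ∈ ℝ` and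
`x ≥ 0`, the measures `ν(u - φ + dz)/ν̄(u)` on `(-x,∞)` converge weakly to
`e^{αφ} α e^{-αz} dz`: for every bounded measurable `g` on `(-x,∞)` that is continuous
almost everywhere,
`∫_{z > -x} g(z) ν(u-φ+dz)/ν̄(u) → e^{αφ} ∫_{-x}^∞ g(z) α e^{-αz} dz`. -/
theorem shifted_tail_weak_convergence
    (α : ℝ) (hα : 0 < α) (ν : Measure ℝ)
    (hsupp : ν (Set.Iic 0) = 0) (hfin : ∀ c : ℝ, 0 < c → ν (Set.Ioi c) < ⊤)
    (hnz : ∃ x₀ : ℝ, 0 < x₀ ∧ 0 < ν (Set.Ioi x₀))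
    (hconv : ∀ y : ℝ, Tendsto (fun u => mtail ν (u + y) / mtail ν u) atTop
      (nhds (Real.exp (-α * y))))
    (φ x : ℝ) (hx : 0 ≤ x)
    (g : ℝ → ℝ) (hg_meas : Measurable g) (hg_bdd : ∃ C : ℝ, ∀ z, |g z| ≤ C)
    (hg_cont : ∀ᵐ z ∂(volume.restrict (Set.Ioi (-x))), ContinuousAt g z) :
    Tendsto (fun u =>
        (∫ ξ in {ξ : ℝ | -x < ξ - (u - φ)}, g (ξ - (u - φ)) ∂ν) / mtail ν u)
      atTop
      (nhds (Real.exp (α * φ) *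
        ∫ z in Set.Ioi (-x), g z * (α * Real.exp (-α * z)))) :=
  shifted_tail_weak_convergence_general α hα ν hconv φ x g hg_meas hg_bdd hg_cont

end GriffinMaller
end
end
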